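/- arXiv:1903.05622 — 6 statements merged into one kernel-verified Lean document; each statement's English description precedes it below -/
import Mathlib

section
/- For any real nonnegative symmetric 2×2 matrices A and B, det(A + B) ≥ (√(det A) + √(det B))². -/
open Matrix
set_option maxHeartbeats 1000000 in

theorem minkowski_det (A B : Matrix (Fin 2) (Fin 2) ℝ)
    (hA : A.PosSemidef) (hB : B.PosSemidef) :
    (Real.sqrt A.det + Real.sqrt B.det) ^ 2 ≤ (A + B).det := by
  have hdA : 0 ≤ A.det := by
    rw [hA.1.det_eq_prod_eigenvalues]
    exact Finset.prod_nonneg fun i _ => hA.eigenvalues_nonneg i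
  have hdB : 0 ≤ B.det := by
    rw [hB.1.det_eq_prod_eigenvalues]
    exact Finset.prod_nonneg fun i _ => hB.eigenvalues_nonneg i
  have ha0 : 0 ≤ A 0 0 := by
    have := hA.2 (Finsupp.single 0 1)
    simpa [Matrix.mulVec, dotProduct, Fin.sum_univ_two] using this
  have ha1 : 0 ≤ A 1 1 := by
    have := hA.2 (Finsupp.single 1 1)
    simpa [Matrix.mulVec, dotProduct, Fin.sum_univ_two] using this
  have hb0 : 0 ≤ B 0 0 := by
    have := hB.2 (Finsupp.single 0 1)
    simpa [Matrix.mulVec, dotProduct, Fin.sum_univ_two] using this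
  have hb1 : 0 ≤ B 1 1 := by
    have := hB.2 (Finsupp.single 1 1)
    simpa [Matrix.mulVec, dotProduct, Fin.sum_univ_two] using this
  have hAs : A 1 0 = A 0 1 := by
    have := hA.1.apply 1 0; simpa using this.symm
  have hBs : B 1 0 = B 0 1 := by
    have := hB.1.apply 1 0; simpa using this.symm
  have hdA' : A.det = A 0 0 * A 1 1 - A 0 1 * A 0 1 := by
    rw [Matrix.det_fin_two, hAs]
  have hdB' : B.det = B 0 0 * B 1 1 - B 0 1 * B 0 1 := by
    rw [Matrix.det_fin_two, hBs]
  set a0 := A 0 0; set a1 := A 1 1; set p := A 0 1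
  set b0 := B 0 0; set b1 := B 1 1; set q := B 0 1
  have hsA : Real.sqrt A.det ^ 2 = A.det := Real.sq_sqrt hdA
  have hsB : Real.sqrt B.det ^ 2 = B.det := Real.sq_sqrt hdB
  have hsA0 : 0 ≤ Real.sqrt A.det := Real.sqrt_nonneg _
  have hsB0 : 0 ≤ Real.sqrt B.det := Real.sqrt_nonneg _
  have key : 2 * (Real.sqrt A.det * Real.sqrt B.det) ≤ a0 * b1 + a1 * b0 - 2 * (p * q) := by
    rcases eq_or_lt_of_le ha0 with h0 | h0
    · have hp : p = 0 := by nlinarith [sq_nonneg p]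
      have hz : A.det = 0 := by rw [hdA', ← h0, hp]; ring
      have e1 : a0 * b1 = 0 := by rw [← h0]; ring
      have e2 : p * q = 0 := by rw [hp]; ring
      rw [hz, Real.sqrt_zero]
      nlinarith [mul_nonneg ha1 hb0]
    rcases eq_or_lt_of_le hb0 with h1 | h1
    · have hq : q = 0 := by nlinarith [sq_nonneg q]
      have hz : B.det = 0 := by rw [hdB', ← h1, hq]; ring
      have e1 : a1 * b0 = 0 := by rw [← h1]; ring
      have e2 : p * q = 0 := by rw [hq]; ring
      rw [hz, Real.sqrt_zero]
      nlinarith [mul_nonneg ha0 hb1]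
    · have e1 : (a0 * b1 + a1 * b0 - 2 * (p * q)) * (a0 * b0)
          = A.det * b0 ^ 2 + B.det * a0 ^ 2 + (p * b0 - q * a0) ^ 2 := by
        rw [hdA', hdB']; ring
      have e2 : 2 * (Real.sqrt A.det * Real.sqrt B.det) * (a0 * b0)
          ≤ A.det * b0 ^ 2 + B.det * a0 ^ 2 := by
        nlinarith [sq_nonneg (Real.sqrt A.det * b0 - Real.sqrt B.det * a0), hsA, hsB]
      have e3 : 2 * (Real.sqrt A.det * Real.sqrt B.det) * (a0 * b0)
          ≤ (a0 * b1 + a1 * b0 - 2 * (p * q)) * (a0 * b0) := by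
        rw [e1]; nlinarith [sq_nonneg (p * b0 - q * a0)]
      exact le_of_mul_le_mul_right e3 (mul_pos h0 h1)
  have hdAB : (A + B).det = (a0 + b0) * (a1 + b1) - (p + q) * (p + q) := by
    rw [Matrix.det_fin_two]
    simp only [Matrix.add_apply, hAs, hBs]
    rfl
  rw [hdAB]
  nlinarith [key, hsA, hsB]
end

section
/- Let H : [a,b] → M_{2×2}(ℝ) be an integrable function with H(t) symmetric positive semidefinite and det H(t) = 1 for almost every t. Then det(∫_a^b H(t) dt) ≥ (b-a)². -/
open Matrix MeasureTheory

theorem det_integral_ge_sq (a b : ℝ) (hab : a ≤ b)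
    (H : ℝ → Matrix (Fin 2) (Fin 2) ℝ)
    (hint : ∀ i j, IntegrableOn (fun t => H t i j) (Set.Icc a b))
    (hpsd : ∀ᵐ t ∂(volume.restrict (Set.Icc a b)), (H t).PosSemidef)
    (hdet : ∀ᵐ t ∂(volume.restrict (Set.Icc a b)), (H t).det = 1) :
    (b - a) ^ 2 ≤ (Matrix.of fun i j => ∫ t in Set.Icc a b, H t i j :
      Matrix (Fin 2) (Fin 2) ℝ).det := by
  set μ := volume.restrict (Set.Icc a b) with hμ
  set p : ℝ → ℝ := fun t => H t 0 0 with hpdef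
  set r : ℝ → ℝ := fun t => H t 1 1 with hrdef
  set q : ℝ → ℝ := fun t => H t 0 1 with hqdef
  have hip : Integrable p μ := hint 0 0
  have hir : Integrable r μ := hint 1 1
  have hiq : Integrable q μ := hint 0 1
  -- symmetry a.e.
  have hsym : ∀ᵐ t ∂μ, H t 1 0 = q t := by
    filter_upwards [hpsd] with t ht
    simpa using ht.1.apply 0 1
  -- diagonal entries nonneg a.e.
  have hp0 : ∀ᵐ t ∂μ, 0 ≤ p t := by
    filter_upwards [hpsd] with t ht
    exact ht.diag_nonneg
  have hr0 : ∀ᵐ t ∂μ, 0 ≤ r t := by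
    filter_upwards [hpsd] with t ht
    exact ht.diag_nonneg
  -- det relation a.e.: p * r = 1 + q ^ 2
  have hpr : ∀ᵐ t ∂μ, p t * r t = 1 + q t ^ 2 := by
    filter_upwards [hdet, hsym] with t h1 h2
    rw [Matrix.det_fin_two] at h1
    simp only [hqdef] at h2
    simp only [hpdef, hrdef, hqdef]
    rw [h2] at h1
    linear_combination h1
  have hvol : (μ Set.univ).toReal = b - a := by
    simp [hμ, Real.volume_Icc, ENNReal.toReal_ofReal (sub_nonneg.2 hab)]
  set P : ℝ := ∫ t, p t ∂μ with hP
  set R : ℝ := ∫ t, r t ∂μ with hR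
  set Q : ℝ := ∫ t, q t ∂μ with hQ
  have hPnn : 0 ≤ P := integral_nonneg_of_ae hp0
  have hRnn : 0 ≤ R := integral_nonneg_of_ae hr0
  -- the function √(1+q²)
  set g : ℝ → ℝ := fun t => Real.sqrt (1 + q t ^ 2) with hg
  have hg_meas : AEStronglyMeasurable g μ := by
    have h1 : (fun t => 1 + q t ^ 2) = fun t => 1 + q t * q t := by
      ext t; ring
    exact Real.continuous_sqrt.comp_aestronglyMeasurable
      (h1 ▸ ((hiq.1.mul hiq.1).const_add 1))
  have hg_int : Integrable g μ := by
    refine Integrable.mono' ((integrable_const 1).add hiq.abs) hg_meas ?_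
    filter_upwards with t
    rw [Real.norm_of_nonneg (Real.sqrt_nonneg _)]
    have h2 : (1 : ℝ) + q t ^ 2 ≤ (1 + |q t|) ^ 2 := by
      nlinarith [abs_nonneg (q t), sq_abs (q t)]
    calc g t ≤ Real.sqrt ((1 + |q t|) ^ 2) := Real.sqrt_le_sqrt h2
      _ = 1 + |q t| := Real.sqrt_sq (by positivity)
  -- Minkowski-type step: √((b-a)² + Q²) ≤ ∫ g
  have hmink : Real.sqrt ((b - a) ^ 2 + Q ^ 2) ≤ ∫ t, g t ∂μ := by
    set N : ℝ := Real.sqrt ((b - a) ^ 2 + Q ^ 2) with hN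
    rcases eq_or_lt_of_le (Real.sqrt_nonneg ((b - a) ^ 2 + Q ^ 2)) with h0 | h0
    · rw [hN, ← h0]
      exact integral_nonneg fun t => Real.sqrt_nonneg _
    · set c : ℝ := (b - a) / N with hc
      set s : ℝ := Q / N with hs
      have hN2 : N ^ 2 = (b - a) ^ 2 + Q ^ 2 := Real.sq_sqrt (by positivity)
      have hcs : c ^ 2 + s ^ 2 = 1 := by
        field_simp [hc, hs]
        rw [hc, hs, div_pow, div_pow, ← add_div, ← hN2]
        exact div_self (pow_ne_zero 2 h0.ne')
      have hpt : ∀ t, c + s * q t ≤ g t := by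
        intro t
        have h3 : (c + s * q t) ^ 2 ≤ 1 + q t ^ 2 := by
          nlinarith [sq_nonneg (c * q t - s), hcs]
        calc c + s * q t ≤ |c + s * q t| := le_abs_self _
          _ = Real.sqrt ((c + s * q t) ^ 2) := (Real.sqrt_sq_eq_abs _).symm
          _ ≤ g t := Real.sqrt_le_sqrt h3
      have hint2 : Integrable (fun t => c + s * q t) μ :=
        (integrable_const c).add (hiq.const_mul s)
      have h4 : ∫ t, (c + s * q t) ∂μ = c * (b - a) + s * Q := by
        rw [integral_add (integrable_const c) (hiq.const_mul s),
          integral_const, integral_const_mul, measureReal_def, hvol, smul_eq_mul, mul_comm c]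
      have h5 : c * (b - a) + s * Q = N := by
        rw [hc, hs]
        field_simp
        rw [div_eq_iff h0.ne']
        exact (Real.mul_self_sqrt (by positivity)).symm
      calc N = ∫ t, (c + s * q t) ∂μ := by rw [h4, h5]
        _ ≤ ∫ t, g t ∂μ := integral_mono hint2 hg_int hpt
  -- g equals √p·√r a.e.
  have hgeq : ∫ t, g t ∂μ = ∫ t, Real.sqrt (p t) * Real.sqrt (r t) ∂μ := by
    refine integral_congr_ae ?_
    filter_upwards [hpr, hp0] with t h1 h2
    rw [← Real.sqrt_mul h2, h1]
  -- Cauchy-Schwarz step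
  have hsp_meas : AEStronglyMeasurable (fun t => Real.sqrt (p t)) μ :=
    Real.continuous_sqrt.comp_aestronglyMeasurable hip.1
  have hsr_meas : AEStronglyMeasurable (fun t => Real.sqrt (r t)) μ :=
    Real.continuous_sqrt.comp_aestronglyMeasurable hir.1
  have hmemp : MemLp (fun t => Real.sqrt (p t)) (ENNReal.ofReal 2) μ := by
    rw [show ENNReal.ofReal 2 = 2 by norm_num]
    rw [memLp_two_iff_integrable_sq hsp_meas]
    refine hip.congr ?_
    filter_upwards [hp0] with t ht
    rw [Real.sq_sqrt ht]
  have hmemr : MemLp (fun t => Real.sqrt (r t)) (ENNReal.ofReal 2) μ := by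
    rw [show ENNReal.ofReal 2 = 2 by norm_num]
    rw [memLp_two_iff_integrable_sq hsr_meas]
    refine hir.congr ?_
    filter_upwards [hr0] with t ht
    rw [Real.sq_sqrt ht]
  have hCS : ∫ t, Real.sqrt (p t) * Real.sqrt (r t) ∂μ
      ≤ P ^ ((1 : ℝ)/2) * R ^ ((1 : ℝ)/2) := by
    have h := MeasureTheory.integral_mul_le_Lp_mul_Lq_of_nonneg
      (Real.HolderConjugate.two_two : Real.HolderConjugate 2 2)
      (Filter.Eventually.of_forall fun t => Real.sqrt_nonneg (p t))
      (Filter.Eventually.of_forall fun t => Real.sqrt_nonneg (r t)) hmemp hmemr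
    have hep : ∫ t, Real.sqrt (p t) ^ (2 : ℝ) ∂μ = P := by
      refine integral_congr_ae ?_
      filter_upwards [hp0] with t ht
      rw [Real.rpow_two, Real.sq_sqrt ht]
    have her : ∫ t, Real.sqrt (r t) ^ (2 : ℝ) ∂μ = R := by
      refine integral_congr_ae ?_
      filter_upwards [hr0] with t ht
      rw [Real.rpow_two, Real.sq_sqrt ht]
    rwa [hep, her] at h
  -- combine: (b-a)² + Q² ≤ P * R
  have hkey : (b - a) ^ 2 + Q ^ 2 ≤ P * R := by
    have h6 : Real.sqrt ((b - a) ^ 2 + Q ^ 2) ≤ P ^ ((1:ℝ)/2) * R ^ ((1:ℝ)/2) :=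
      hmink.trans (hgeq ▸ hCS)
    have h7 : (P ^ ((1:ℝ)/2) * R ^ ((1:ℝ)/2)) ^ 2 = P * R := by
      rw [mul_pow, ← Real.rpow_natCast (P ^ ((1:ℝ)/2)) 2,
        ← Real.rpow_natCast (R ^ ((1:ℝ)/2)) 2,
        ← Real.rpow_mul hPnn, ← Real.rpow_mul hRnn]
      norm_num
    have h8 : ((b - a) ^ 2 + Q ^ 2) = Real.sqrt ((b - a) ^ 2 + Q ^ 2) ^ 2 :=
      (Real.sq_sqrt (by positivity)).symm
    calc (b - a) ^ 2 + Q ^ 2 = Real.sqrt ((b - a) ^ 2 + Q ^ 2) ^ 2 := h8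
      _ ≤ (P ^ ((1:ℝ)/2) * R ^ ((1:ℝ)/2)) ^ 2 :=
        pow_le_pow_left₀ (Real.sqrt_nonneg _) h6 2
      _ = P * R := h7
  -- finish
  have hQ10 : (∫ t in Set.Icc a b, H t 1 0) = Q := by
    rw [hQ]
    exact integral_congr_ae hsym
  rw [Matrix.det_fin_two]
  simp only [Matrix.of_apply]
  rw [hQ10]
  show (b - a) ^ 2 ≤ P * R - Q * Q
  nlinarith [hkey]
end

section
/- Let H : [a,b] → M_{2×2}(ℝ) be an integrable function with H(t) symmetric positive semidefinite for almost every t. Then det(∫_a^b H(t) dt) ≥ (∫_a^b √(det H(t)) dt)². -/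
open Matrix MeasureTheory

set_option maxHeartbeats 1000000 in

theorem det_integral_ge_integral_sqrt_det (a b : ℝ) (hab : a ≤ b)
    (H : ℝ → Matrix (Fin 2) (Fin 2) ℝ)
    (hint : ∀ i j, IntegrableOn (fun t => H t i j) (Set.Icc a b))
    (hpsd : ∀ᵐ t ∂(volume.restrict (Set.Icc a b)), (H t).PosSemidef) :
    (∫ t in Set.Icc a b, Real.sqrt (H t).det) ^ 2 ≤
      (Matrix.of fun i j => ∫ t in Set.Icc a b, H t i j :
        Matrix (Fin 2) (Fin 2) ℝ).det := by
  -- a.e. pointwise facts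
  have key : ∀ᵐ t ∂(volume.restrict (Set.Icc a b)),
      H t 0 1 = H t 1 0 ∧ 0 ≤ H t 0 0 ∧ 0 ≤ H t 1 1 ∧ 0 ≤ Real.sqrt (H t).det ∧
      Real.sqrt (H t).det ^ 2 + H t 1 0 ^ 2 = H t 0 0 * H t 1 1 := by
    filter_upwards [hpsd] with t ht
    have hsym : H t 0 1 = H t 1 0 := by
      have h1 := ht.1.apply 1 0
      simpa using h1
    have hquad : ∀ u : ℝ, 0 ≤ H t 0 0 * (u * u) + (2 * H t 1 0) * u + H t 1 1 := by
      intro u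
      have h2 := ht.dotProduct_mulVec_nonneg ![u, 1]
      simp [dotProduct, mulVec, Fin.sum_univ_two] at h2
      rw [hsym] at h2
      nlinarith [h2]
    have hdisc := discrim_le_zero hquad
    rw [discrim] at hdisc
    have hdet : (H t).det = H t 0 0 * H t 1 1 - H t 1 0 ^ 2 := by
      rw [Matrix.det_fin_two, hsym]; ring
    have hdet0 : 0 ≤ (H t).det := by rw [hdet]; nlinarith [hdisc]
    have hp0 : 0 ≤ H t 0 0 := by
      have h2 := ht.dotProduct_mulVec_nonneg ![1, 0]
      simpa [dotProduct, mulVec, Fin.sum_univ_two] using h2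
    have hq0 : 0 ≤ H t 1 1 := by
      have h2 := ht.dotProduct_mulVec_nonneg ![0, 1]
      simpa [dotProduct, mulVec, Fin.sum_univ_two] using h2
    refine ⟨hsym, hp0, hq0, Real.sqrt_nonneg _, ?_⟩
    have hsq : Real.sqrt (H t).det ^ 2 = (H t).det := Real.sq_sqrt hdet0
    rw [hsq, hdet]; ring
  -- integrability
  have hIp : Integrable (fun t => H t 0 0) (volume.restrict (Set.Icc a b)) := hint 0 0
  have hIq : Integrable (fun t => H t 1 1) (volume.restrict (Set.Icc a b)) := hint 1 1
  have hIr : Integrable (fun t => H t 1 0) (volume.restrict (Set.Icc a b)) := hint 1 0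
  have hIr' : Integrable (fun t => H t 0 1) (volume.restrict (Set.Icc a b)) := hint 0 1
  have hId : Integrable (fun t => Real.sqrt (H t).det) (volume.restrict (Set.Icc a b)) := by
    have hmd : AEStronglyMeasurable (fun t => (H t).det) (volume.restrict (Set.Icc a b)) := by
      have heq : (fun t => (H t).det) = fun t => H t 0 0 * H t 1 1 - H t 0 1 * H t 1 0 := by
        funext t; rw [Matrix.det_fin_two]
      rw [heq]
      exact (hIp.aestronglyMeasurable.mul hIq.aestronglyMeasurable).sub
        (hIr'.aestronglyMeasurable.mul hIr.aestronglyMeasurable)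
    refine Integrable.mono' (g := fun t => (H t 0 0 + H t 1 1) / 2)
      (by exact (hIp.add hIq).div_const 2)
      (Real.continuous_sqrt.comp_aestronglyMeasurable hmd) ?_
    filter_upwards [key] with t ⟨hsym, hp0, hq0, hd0, hpyth⟩
    rw [Real.norm_eq_abs, abs_of_nonneg hd0]
    have h1 : Real.sqrt (H t).det ^ 2 ≤ ((H t 0 0 + H t 1 1) / 2) ^ 2 := by
      nlinarith [sq_nonneg (H t 0 0 - H t 1 1), sq_nonneg (H t 1 0)]
    calc Real.sqrt (H t).det = Real.sqrt (Real.sqrt (H t).det ^ 2) :=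
          (Real.sqrt_sq hd0).symm
      _ ≤ Real.sqrt (((H t 0 0 + H t 1 1) / 2) ^ 2) := Real.sqrt_le_sqrt h1
      _ = (H t 0 0 + H t 1 1) / 2 := Real.sqrt_sq (by positivity)
  -- name the integrals
  obtain ⟨A, hA⟩ : ∃ x, x = ∫ t in Set.Icc a b, H t 0 0 := ⟨_, rfl⟩
  obtain ⟨B, hB⟩ : ∃ x, x = ∫ t in Set.Icc a b, H t 1 1 := ⟨_, rfl⟩
  obtain ⟨C, hC⟩ : ∃ x, x = ∫ t in Set.Icc a b, H t 1 0 := ⟨_, rfl⟩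
  obtain ⟨I, hI⟩ : ∃ x, x = ∫ t in Set.Icc a b, Real.sqrt (H t).det := ⟨_, rfl⟩
  have hCC' : (∫ t in Set.Icc a b, H t 0 1) = C := by
    rw [hC]
    refine integral_congr_ae ?_
    filter_upwards [key] with t ht using ht.1
  have hA0 : 0 ≤ A := by
    rw [hA]
    refine integral_nonneg_of_ae ?_
    filter_upwards [key] with t ht using ht.2.1
  have hB0 : 0 ≤ B := by
    rw [hB]
    refine integral_nonneg_of_ae ?_
    filter_upwards [key] with t ht using ht.2.2.1
  set K := Real.sqrt (I ^ 2 + C ^ 2) with hK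
  have hK0 : 0 ≤ K := Real.sqrt_nonneg _
  have hK2 : K ^ 2 = I ^ 2 + C ^ 2 := Real.sq_sqrt (by positivity)
  -- main inequality for each positive l
  have main : ∀ l : ℝ, 0 < l → I ^ 2 + C ^ 2 ≤ K * ((l * A + B / l) / 2) := by
    intro l hl
    have hpt : ∀ᵐ t ∂(volume.restrict (Set.Icc a b)),
        I * Real.sqrt (H t).det + C * H t 1 0 ≤
          K * ((l * H t 0 0 + H t 1 1 / l) / 2) := by
      filter_upwards [key] with t ⟨hsym, hp0, hq0, hd0, hpyth⟩
      have hs0 : 0 ≤ Real.sqrt (H t 0 0 * H t 1 1) := Real.sqrt_nonneg _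
      have hsq : Real.sqrt (H t 0 0 * H t 1 1) ^ 2 = H t 0 0 * H t 1 1 :=
        Real.sq_sqrt (mul_nonneg hp0 hq0)
      have hstep1 : I * Real.sqrt (H t).det + C * H t 1 0 ≤
          K * Real.sqrt (H t 0 0 * H t 1 1) := by
        calc I * Real.sqrt (H t).det + C * H t 1 0
            ≤ |I * Real.sqrt (H t).det + C * H t 1 0| := le_abs_self _
          _ = Real.sqrt ((I * Real.sqrt (H t).det + C * H t 1 0) ^ 2) :=
              (Real.sqrt_sq_eq_abs _).symm
          _ ≤ Real.sqrt ((K * Real.sqrt (H t 0 0 * H t 1 1)) ^ 2) := by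
              apply Real.sqrt_le_sqrt
              rw [mul_pow, hK2, hsq, ← hpyth]
              nlinarith [sq_nonneg (I * H t 1 0 - C * Real.sqrt (H t).det)]
          _ = K * Real.sqrt (H t 0 0 * H t 1 1) := Real.sqrt_sq (by positivity)
      have hstep2 : Real.sqrt (H t 0 0 * H t 1 1) ≤ (l * H t 0 0 + H t 1 1 / l) / 2 := by
        have hx : 0 ≤ l * H t 0 0 := by positivity
        have hy : 0 ≤ H t 1 1 / l := by positivity
        have hxy : l * H t 0 0 * (H t 1 1 / l) = H t 0 0 * H t 1 1 := by
          field_simp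
        rw [show H t 0 0 * H t 1 1 = l * H t 0 0 * (H t 1 1 / l) from hxy.symm,
          Real.sqrt_mul hx]
        have h2 := two_mul_le_add_sq (Real.sqrt (l * H t 0 0)) (Real.sqrt (H t 1 1 / l))
        rw [Real.sq_sqrt hx, Real.sq_sqrt hy] at h2
        linarith
      calc I * Real.sqrt (H t).det + C * H t 1 0
          ≤ K * Real.sqrt (H t 0 0 * H t 1 1) := hstep1
        _ ≤ K * ((l * H t 0 0 + H t 1 1 / l) / 2) :=
            mul_le_mul_of_nonneg_left hstep2 hK0
    have hlhs : Integrable (fun t => I * Real.sqrt (H t).det + C * H t 1 0)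
        (volume.restrict (Set.Icc a b)) :=
      (hId.const_mul I).add (hIr.const_mul C)
    have hrhs : Integrable (fun t => K * ((l * H t 0 0 + H t 1 1 / l) / 2))
        (volume.restrict (Set.Icc a b)) := by
      exact ((((hIp.const_mul l).add (hIq.div_const l)).div_const 2).const_mul K)
    have hmono := integral_mono_ae hlhs hrhs hpt
    rw [integral_add (hId.const_mul I) (hIr.const_mul C), integral_const_mul,
      integral_const_mul, integral_const_mul, integral_div,
      integral_add (hIp.const_mul l) (hIq.div_const l), integral_const_mul,
      integral_div, ← hA, ← hB, ← hC, ← hI] at hmono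
    nlinarith [hmono]
  -- K ^ 2 ≤ A * B
  have hKAB : K ^ 2 ≤ A * B := by
    rcases eq_or_lt_of_le hK0 with hKz | hKpos
    · rw [← hKz]; simpa using mul_nonneg hA0 hB0
    · have hzero : A = 0 ∨ B = 0 → False := by
        intro hAB
        have hdr : ∀ᵐ t ∂(volume.restrict (Set.Icc a b)),
            Real.sqrt (H t).det = 0 ∧ H t 1 0 = 0 := by
          rcases hAB with hAz | hBz
          · have hnn : 0 ≤ᵐ[volume.restrict (Set.Icc a b)] (fun t => H t 0 0) := by
              filter_upwards [key] with t ht using ht.2.1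
            have hp_ae : (fun t => H t 0 0) =ᵐ[volume.restrict (Set.Icc a b)] 0 :=
              (integral_eq_zero_iff_of_nonneg_ae hnn hIp).mp (by rw [← hA]; exact hAz)
            filter_upwards [key, hp_ae] with t ⟨hsym, hp0, hq0, hd0, hpyth⟩ hpt
            simp only [Pi.zero_apply] at hpt
            rw [hpt, zero_mul] at hpyth
            constructor <;> nlinarith [sq_nonneg (Real.sqrt (H t).det), sq_nonneg (H t 1 0)]
          · have hnn : 0 ≤ᵐ[volume.restrict (Set.Icc a b)] (fun t => H t 1 1) := by
              filter_upwards [key] with t ht using ht.2.2.1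
            have hq_ae : (fun t => H t 1 1) =ᵐ[volume.restrict (Set.Icc a b)] 0 :=
              (integral_eq_zero_iff_of_nonneg_ae hnn hIq).mp (by rw [← hB]; exact hBz)
            filter_upwards [key, hq_ae] with t ⟨hsym, hp0, hq0, hd0, hpyth⟩ hqt
            simp only [Pi.zero_apply] at hqt
            rw [hqt, mul_zero] at hpyth
            constructor <;> nlinarith [sq_nonneg (Real.sqrt (H t).det), sq_nonneg (H t 1 0)]
        have hIz : I = 0 := by
          rw [hI]
          apply integral_eq_zero_of_ae
          filter_upwards [hdr] with t ht using ht.1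
        have hCz : C = 0 := by
          rw [hC]
          apply integral_eq_zero_of_ae
          filter_upwards [hdr] with t ht using ht.2
        rw [hK, hIz, hCz] at hKpos
        simp at hKpos
      have hApos : 0 < A := lt_of_le_of_ne hA0 (fun h => hzero (Or.inl h.symm))
      have hBpos : 0 < B := lt_of_le_of_ne hB0 (fun h => hzero (Or.inr h.symm))
      have hsa0 : 0 < Real.sqrt A := Real.sqrt_pos.mpr hApos
      have hsb0 : 0 < Real.sqrt B := Real.sqrt_pos.mpr hBpos
      have hsa2 : Real.sqrt A ^ 2 = A := Real.sq_sqrt hA0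
      have hsb2 : Real.sqrt B ^ 2 = B := Real.sq_sqrt hB0
      have hl : 0 < Real.sqrt B / Real.sqrt A := by positivity
      have hmain := main (Real.sqrt B / Real.sqrt A) hl
      have harith : Real.sqrt B / Real.sqrt A * A + B / (Real.sqrt B / Real.sqrt A)
          = 2 * (Real.sqrt A * Real.sqrt B) := by
        field_simp
        nlinarith [hsa2, hsb2]
      rw [harith] at hmain
      have hKK : K * K ≤ K * (Real.sqrt A * Real.sqrt B) := by
        calc K * K = K ^ 2 := by ring
          _ = I ^ 2 + C ^ 2 := hK2
          _ ≤ K * (2 * (Real.sqrt A * Real.sqrt B) / 2) := hmain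
          _ = K * (Real.sqrt A * Real.sqrt B) := by ring
      have hKle : K ≤ Real.sqrt A * Real.sqrt B := le_of_mul_le_mul_left hKK hKpos
      calc K ^ 2 ≤ (Real.sqrt A * Real.sqrt B) ^ 2 := by nlinarith [hK0]
        _ = A * B := by rw [mul_pow, hsa2, hsb2]
  -- finish
  rw [Matrix.det_fin_two]
  simp only [Matrix.of_apply]
  rw [← hA, ← hB, ← hC, ← hI, hCC']
  nlinarith [hK2, hKAB, sq_nonneg C]
end

section
/- Let q₁, q₂, q be real measurable functions on ℝ₊ with q₁ q₂ - q² = 1 and q₁, q₂ > 0 almost everywhere (i.e., Q = ((q₁,q),(q,q₂)) is a.e. positive with det Q = 1). Then |q₁ - q₂ + 2iq|² = (q₁ + q₂)² - 4 pointwise a.e., and if ∫₀^∞ (q₁ + q₂ - 2) dt ≤ 𝔮, then the function q₁ - q₂ + 2iq can be written as f₁ + f₂ with ‖f₁‖_{L¹(ℝ₊)} ≤ 3𝔮 and ‖f₂‖_{L²(ℝ₊)} ≤ 3√𝔮. -/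
open MeasureTheory ENNReal

theorem q_decomposition (q₁ q₂ q : ℝ → ℝ)
    (hm1 : Measurable q₁) (hm2 : Measurable q₂) (hm : Measurable q)
    (hdet : ∀ᵐ t ∂(volume.restrict (Set.Ioi (0:ℝ))), q₁ t * q₂ t - q t ^ 2 = 1)
    (hpos1 : ∀ᵐ t ∂(volume.restrict (Set.Ioi (0:ℝ))), 0 < q₁ t)
    (hpos2 : ∀ᵐ t ∂(volume.restrict (Set.Ioi (0:ℝ))), 0 < q₂ t)
    (qq : ℝ)
    (hqq : ∫⁻ t in Set.Ioi (0:ℝ), ENNReal.ofReal (q₁ t + q₂ t - 2) ≤ ENNReal.ofReal qq) :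
    (∀ᵐ t ∂(volume.restrict (Set.Ioi (0:ℝ))),
      ‖(q₁ t : ℂ) - q₂ t + 2 * q t * Complex.I‖ ^ 2 = (q₁ t + q₂ t) ^ 2 - 4) ∧
    ∃ f₁ f₂ : ℝ → ℂ,
      (∀ t ∈ Set.Ioi (0:ℝ), (q₁ t : ℂ) - q₂ t + 2 * q t * Complex.I = f₁ t + f₂ t) ∧
      eLpNorm f₁ 1 (volume.restrict (Set.Ioi (0:ℝ))) ≤ ENNReal.ofReal (3 * qq) ∧
      eLpNorm f₂ 2 (volume.restrict (Set.Ioi (0:ℝ))) ≤ ENNReal.ofReal (3 * Real.sqrt qq) := by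
  set μ := volume.restrict (Set.Ioi (0:ℝ)) with hμ
  set g : ℝ → ℂ := fun t => (q₁ t : ℂ) - q₂ t + 2 * q t * Complex.I with hg
  have habs : ∀ t, ‖g t‖ ^ 2 = (q₁ t - q₂ t) ^ 2 + (2 * q t) ^ 2 := by
    intro t
    rw [← Complex.normSq_eq_norm_sq, Complex.normSq_apply]
    simp [hg]
    ring
  have hA : ∀ᵐ t ∂μ, ‖g t‖ ^ 2 = (q₁ t + q₂ t) ^ 2 - 4 ∧ 2 ≤ q₁ t + q₂ t := by
    filter_upwards [hdet, hpos1, hpos2] with t h1 h2 h3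
    constructor
    · rw [habs]; nlinarith
    · nlinarith [sq_nonneg (q₁ t - q₂ t), sq_nonneg (q t)]
  refine ⟨hA.mono fun t ht => ht.1, ?_⟩
  set f₁ : ℝ → ℂ := fun t => if 3 < q₁ t + q₂ t then g t else 0 with hf₁
  set f₂ : ℝ → ℂ := fun t => if 3 < q₁ t + q₂ t then 0 else g t with hf₂
  have hmg : Measurable g := by
    apply Measurable.add
    · exact (Complex.measurable_ofReal.comp hm1).sub (Complex.measurable_ofReal.comp hm2)
    · exact ((Complex.measurable_ofReal.comp hm).const_mul 2).mul_const Complex.I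
  have hms : MeasurableSet {t | 3 < q₁ t + q₂ t} :=
    measurableSet_lt measurable_const (hm1.add hm2)
  have hmf₁ : Measurable f₁ := Measurable.ite hms hmg measurable_const
  have hmf₂ : Measurable f₂ := Measurable.ite hms measurable_const hmg
  refine ⟨f₁, f₂, ?_, ?_, ?_⟩
  · intro t _
    by_cases h : 3 < q₁ t + q₂ t <;> simp [hf₁, hf₂, h, hg]
  · -- L¹ bound for f₁
    rw [eLpNorm_one_eq_lintegral_enorm]
    have hbound : ∀ᵐ t ∂μ, (‖f₁ t‖₊ : ℝ≥0∞) ≤ ENNReal.ofReal (3 * (q₁ t + q₂ t - 2)) := by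
      filter_upwards [hA] with t ht
      obtain ⟨h1, h2⟩ := ht
      by_cases h : 3 < q₁ t + q₂ t
      · simp only [hf₁, if_pos h]
        rw [← ENNReal.ofReal_coe_nnreal, coe_nnnorm]
        apply ENNReal.ofReal_le_ofReal
        have hn : ‖g t‖ = ‖g t‖ := rfl
        rw [hn]
        have h9 : ‖g t‖ ^ 2 ≤ (3 * (q₁ t + q₂ t - 2)) ^ 2 := by
          rw [h1]; nlinarith
        exact (pow_le_pow_iff_left₀ (norm_nonneg _) (by linarith) two_ne_zero).mp h9
      · simp only [hf₁, if_neg h]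
        simp
    calc ∫⁻ t, (‖f₁ t‖₊ : ℝ≥0∞) ∂μ
        ≤ ∫⁻ t, ENNReal.ofReal (3 * (q₁ t + q₂ t - 2)) ∂μ := lintegral_mono_ae hbound
      _ = ∫⁻ t, ENNReal.ofReal 3 * ENNReal.ofReal (q₁ t + q₂ t - 2) ∂μ := by
          simp_rw [← ENNReal.ofReal_mul (by norm_num : (0:ℝ) ≤ 3)]
      _ = ENNReal.ofReal 3 * ∫⁻ t, ENNReal.ofReal (q₁ t + q₂ t - 2) ∂μ := by
          rw [lintegral_const_mul _ (show Measurable fun t => ENNReal.ofReal (q₁ t + q₂ t - 2) from ((hm1.add hm2).sub measurable_const).ennreal_ofReal)]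
      _ ≤ ENNReal.ofReal 3 * ENNReal.ofReal qq := by gcongr
      _ = ENNReal.ofReal (3 * qq) := (ENNReal.ofReal_mul (by norm_num)).symm
  · -- L² bound for f₂
    have hsq : ∀ᵐ t ∂μ, (‖f₂ t‖₊ : ℝ≥0∞) ^ (2:ℝ) ≤
        ENNReal.ofReal 9 * ENNReal.ofReal (q₁ t + q₂ t - 2) := by
      filter_upwards [hA] with t ht
      obtain ⟨h1, h2⟩ := ht
      by_cases h : 3 < q₁ t + q₂ t
      · simp only [hf₂, if_pos h]
        simp [ENNReal.zero_rpow_of_pos]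
      · simp only [hf₂, if_neg h]
        rw [← ENNReal.ofReal_coe_nnreal, coe_nnnorm,
          ENNReal.ofReal_rpow_of_nonneg (norm_nonneg _) (by norm_num : (0:ℝ) ≤ 2),
          ← ENNReal.ofReal_mul (by norm_num : (0:ℝ) ≤ 9)]
        apply ENNReal.ofReal_le_ofReal
        have hn : ‖g t‖ = ‖g t‖ := rfl
        rw [hn, show (2:ℝ) = ((2:ℕ):ℝ) by norm_num, Real.rpow_natCast]
        rw [h1]
        push_neg at h
        push_cast
        nlinarith
    have hL : ∫⁻ t, (‖f₂ t‖₊ : ℝ≥0∞) ^ (2:ℝ) ∂μ ≤ ENNReal.ofReal 9 * ENNReal.ofReal qq := by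
      calc ∫⁻ t, (‖f₂ t‖₊ : ℝ≥0∞) ^ (2:ℝ) ∂μ
          ≤ ∫⁻ t, ENNReal.ofReal 9 * ENNReal.ofReal (q₁ t + q₂ t - 2) ∂μ :=
            lintegral_mono_ae hsq
        _ = ENNReal.ofReal 9 * ∫⁻ t, ENNReal.ofReal (q₁ t + q₂ t - 2) ∂μ := by
            rw [lintegral_const_mul _ (show Measurable fun t => ENNReal.ofReal (q₁ t + q₂ t - 2) from ((hm1.add hm2).sub measurable_const).ennreal_ofReal)]
        _ ≤ ENNReal.ofReal 9 * ENNReal.ofReal qq := by gcongr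
    rw [eLpNorm_eq_lintegral_rpow_enorm_toReal two_ne_zero ENNReal.ofNat_ne_top]
    simp only [ENNReal.toReal_ofNat]
    calc (∫⁻ t, (‖f₂ t‖₊ : ℝ≥0∞) ^ (2:ℝ) ∂μ) ^ (1/(2:ℝ))
        ≤ (ENNReal.ofReal 9 * ENNReal.ofReal qq) ^ (1/(2:ℝ)) := by
          exact ENNReal.rpow_le_rpow hL (by norm_num)
      _ ≤ ENNReal.ofReal (3 * Real.sqrt qq) := by
          rcases le_or_gt 0 qq with hq | hq
          · rw [← ENNReal.ofReal_mul (by norm_num : (0:ℝ) ≤ 9),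
              ENNReal.ofReal_rpow_of_nonneg (by nlinarith) (by norm_num)]
            apply ENNReal.ofReal_le_ofReal
            rw [← Real.sqrt_eq_rpow,
              show (9:ℝ) * qq = 3^2 * qq by norm_num, Real.sqrt_mul (by positivity),
              Real.sqrt_sq (by norm_num)]
          · rw [ENNReal.ofReal_of_nonpos hq.le, mul_zero,
              ENNReal.zero_rpow_of_pos (by norm_num)]
            exact zero_le
end

section
/- Let A and B be real positive definite symmetric 2×2 matrices with det A ≥ 1, det B ≥ 1, and det((A+B)/2) ≤ 1 + δ for some δ ≥ 0. Let C = (Λ_A^{-1})^* B Λ_A^{-1} where Λ_A is the Cholesky factor of A, and write Λ_C = ((x, y), (0, z)) for the Cholesky factor of C. Then 1/(4(1+δ)) ≤ x ≤ 2√(1+δ), 1/(4(1+δ)) ≤ z ≤ 2√(1+δ), and 1/(2√(1+δ)) ≤ xz ≤ 2√(1+δ). -/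
/-!
Write `C = Λ_Cᵀ Λ_C` and `a = det Λ_A`. Since `B = Λ_Aᵀ C Λ_A`, we have
`det A = a²`, `det B = a² (xz)²` and `det ((A + B)/2) = a² det (1 + C) / 4`, where
`det (1 + C) = (1 + x²)(1 + z²) + y²` dominates each of `1`, `x²`, `z²` and `(xz)²`.
So `a² ≤ 4(1 + δ)` and `x², z², (xz)² ≤ 4(1 + δ)`; then `1 ≤ a² (xz)² ≤ 4(1 + δ)(xz)²`
bounds `xz` from below, and `x = xz / z ≥ xz / (2√(1 + δ))` bounds `x` from below.
-/

open Matrix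

section Scalar

variable {K x y z s : ℝ}

lemma le_two_mul_of_sq_le_mul_of_one_le {t E : ℝ} (hs : 0 < s) (hK : 1 ≤ K)
    (hE : t ^ 2 ≤ E) (hKE : K * E ≤ 4 * s ^ 2) : t ≤ 2 * s := by
  refine le_of_pow_le_pow_left₀ two_ne_zero (by positivity) ?_
  nlinarith

lemma mul_bounds_of_det_bounds (hx : 0 < x) (hz : 0 < z) (hs : 0 < s) (hK : 1 ≤ K)
    (hKxz : 1 ≤ K * (x * z) ^ 2)
    (hKE : K * ((1 + x ^ 2) * (1 + z ^ 2) + y ^ 2) ≤ 4 * s ^ 2) :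
    1 / (2 * s) ≤ x * z ∧ x * z ≤ 2 * s := by
  have hK_le : K ≤ 4 * s ^ 2 := by
    nlinarith [sq_nonneg (x * z), sq_nonneg x, sq_nonneg z, sq_nonneg y]
  refine ⟨?_, le_two_mul_of_sq_le_mul_of_one_le hs hK
    (by nlinarith [sq_nonneg x, sq_nonneg z, sq_nonneg y]) hKE⟩
  rw [div_le_iff₀ (by positivity)]
  refine le_of_pow_le_pow_left₀ two_ne_zero (by positivity) ?_
  nlinarith [sq_nonneg (x * z)]

lemma left_bounds_of_det_bounds (hx : 0 < x) (hz : 0 < z) (hs : 0 < s) (hK : 1 ≤ K)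
    (hKxz : 1 ≤ K * (x * z) ^ 2)
    (hKE : K * ((1 + x ^ 2) * (1 + z ^ 2) + y ^ 2) ≤ 4 * s ^ 2) :
    1 / (4 * s ^ 2) ≤ x ∧ x ≤ 2 * s := by
  have hz_le : z ≤ 2 * s := le_two_mul_of_sq_le_mul_of_one_le hs hK
    (by nlinarith [sq_nonneg x, sq_nonneg (x * z), sq_nonneg y]) hKE
  refine ⟨?_, le_two_mul_of_sq_le_mul_of_one_le hs hK
    (by nlinarith [sq_nonneg z, sq_nonneg (x * z), sq_nonneg y]) hKE⟩
  have hxz := (mul_bounds_of_det_bounds hx hz hs hK hKxz hKE).1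
  calc 1 / (4 * s ^ 2) = 1 / (2 * s) / (2 * s) := by field_simp; ring
    _ ≤ x * z / z := div_le_div₀ (by positivity) hxz hz hz_le
    _ = x := by field_simp

lemma bounds_of_det_bounds (hx : 0 < x) (hz : 0 < z) (hs : 0 < s) (hK : 1 ≤ K)
    (hKxz : 1 ≤ K * (x * z) ^ 2)
    (hKE : K * ((1 + x ^ 2) * (1 + z ^ 2) + y ^ 2) ≤ 4 * s ^ 2) :
    (1 / (4 * s ^ 2) ≤ x ∧ x ≤ 2 * s) ∧ (1 / (4 * s ^ 2) ≤ z ∧ z ≤ 2 * s) ∧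
      (1 / (2 * s) ≤ x * z ∧ x * z ≤ 2 * s) := by
  have hKzx : 1 ≤ K * (z * x) ^ 2 := by rwa [mul_comm z]
  have hKE' : K * ((1 + z ^ 2) * (1 + x ^ 2) + y ^ 2) ≤ 4 * s ^ 2 := by
    rwa [mul_comm (1 + z ^ 2)]
  exact ⟨left_bounds_of_det_bounds hx hz hs hK hKxz hKE,
    left_bounds_of_det_bounds hz hx hs hK hKzx hKE',
    mul_bounds_of_det_bounds hx hz hs hK hKxz hKE⟩

end Scalar

section Cholesky

variable {n R : Type*} [Fintype n] [DecidableEq n] [CommRing R]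

lemma transpose_mul_transpose_inv_mul_mul_inv_mul {M B : Matrix n n R} (hM : IsUnit M.det) :
    Mᵀ * ((M⁻¹)ᵀ * B * M⁻¹) * M = B := by
  have hMT : IsUnit Mᵀ.det := by rwa [det_transpose]
  rw [transpose_nonsing_inv, Matrix.mul_assoc, Matrix.mul_assoc, nonsing_inv_mul _ hM,
    Matrix.mul_one, ← Matrix.mul_assoc, mul_nonsing_inv _ hMT, Matrix.one_mul]

lemma det_one_add_transpose_mul_self_fin_two {L : Matrix (Fin 2) (Fin 2) R} (hL : L 1 0 = 0) :
    (1 + Lᵀ * L).det = (1 + L 0 0 ^ 2) * (1 + L 1 1 ^ 2) + L 0 1 ^ 2 := by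
  simp only [det_fin_two, Matrix.add_apply, mul_apply, Fin.sum_univ_two, transpose_apply, hL,
    one_apply_eq, one_apply_ne zero_ne_one, one_apply_ne one_ne_zero]
  ring

lemma det_fin_two_of_lower_eq_zero {L : Matrix (Fin 2) (Fin 2) R} (hL : L 1 0 = 0) :
    L.det = L 0 0 * L 1 1 := by
  rw [det_fin_two, hL, mul_zero, sub_zero]

end Cholesky

theorem cholesky_ratio_bounds_general (A B LA LC : Matrix (Fin 2) (Fin 2) ℝ) (δ : ℝ) (hδ : 0 ≤ δ)
    (hdetA : 1 ≤ A.det) (hdetB : 1 ≤ B.det)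
    (hdetAB : (((1 : ℝ)/2) • (A + B)).det ≤ 1 + δ)
    (hLA : LAᵀ * LA = A)
    (hLCtri : LC 1 0 = 0) (hLC00 : 0 < LC 0 0) (hLC11 : 0 < LC 1 1)
    (hLC : LCᵀ * LC = (LA⁻¹)ᵀ * B * LA⁻¹) :
    (1 / (4 * (1 + δ)) ≤ LC 0 0 ∧ LC 0 0 ≤ 2 * Real.sqrt (1 + δ)) ∧
    (1 / (4 * (1 + δ)) ≤ LC 1 1 ∧ LC 1 1 ≤ 2 * Real.sqrt (1 + δ)) ∧
    (1 / (2 * Real.sqrt (1 + δ)) ≤ LC 0 0 * LC 1 1 ∧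
      LC 0 0 * LC 1 1 ≤ 2 * Real.sqrt (1 + δ)) := by
  have hA_det : A.det = LA.det ^ 2 := by rw [← hLA, det_mul, det_transpose, sq]
  have hLA_det : IsUnit LA.det := by
    refine isUnit_iff_ne_zero.mpr fun h ↦ ?_
    rw [hA_det, h] at hdetA
    norm_num at hdetA
  have hB : B = LAᵀ * (LCᵀ * LC) * LA := by
    rw [hLC, transpose_mul_transpose_inv_mul_mul_inv_mul hLA_det]
  have hB_det : B.det = LA.det ^ 2 * (LC 0 0 * LC 1 1) ^ 2 := by
    rw [hB, det_mul, det_mul, det_transpose, det_mul, det_transpose,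
      det_fin_two_of_lower_eq_zero hLCtri]
    ring
  have hAB_det : (((1 : ℝ)/2) • (A + B)).det =
      LA.det ^ 2 * ((1 + LC 0 0 ^ 2) * (1 + LC 1 1 ^ 2) + LC 0 1 ^ 2) / 4 := by
    have hAB : A + B = LAᵀ * (1 + LCᵀ * LC) * LA := by
      rw [hB, ← hLA, Matrix.mul_add, Matrix.add_mul, Matrix.mul_one]
    rw [det_smul, Fintype.card_fin, hAB, det_mul, det_mul, det_transpose,
      det_one_add_transpose_mul_self_fin_two hLCtri]
    ring
  have hs : Real.sqrt (1 + δ) ^ 2 = 1 + δ := Real.sq_sqrt (by linarith)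
  have h := bounds_of_det_bounds (y := LC 0 1) (s := Real.sqrt (1 + δ)) hLC00 hLC11
    (Real.sqrt_pos.2 (by linarith))
    (hA_det ▸ hdetA) (hB_det ▸ hdetB) (by rw [hs]; linarith)
  rwa [hs] at h

theorem cholesky_ratio_bounds (A B LA LC : Matrix (Fin 2) (Fin 2) ℝ) (δ : ℝ) (hδ : 0 ≤ δ)
    (hA : A.PosDef) (hB : B.PosDef)
    (hdetA : 1 ≤ A.det) (hdetB : 1 ≤ B.det)
    (hdetAB : (((1 : ℝ)/2) • (A + B)).det ≤ 1 + δ)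
    (hLAtri : LA 1 0 = 0) (hLA00 : 0 < LA 0 0) (hLA11 : 0 < LA 1 1)
    (hLA : LAᵀ * LA = A)
    (hLCtri : LC 1 0 = 0) (hLC00 : 0 < LC 0 0) (hLC11 : 0 < LC 1 1)
    (hLC : LCᵀ * LC = (LA⁻¹)ᵀ * B * LA⁻¹) :
    (1 / (4 * (1 + δ)) ≤ LC 0 0 ∧ LC 0 0 ≤ 2 * Real.sqrt (1 + δ)) ∧
    (1 / (4 * (1 + δ)) ≤ LC 1 1 ∧ LC 1 1 ≤ 2 * Real.sqrt (1 + δ)) ∧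
    (1 / (2 * Real.sqrt (1 + δ)) ≤ LC 0 0 * LC 1 1 ∧
      LC 0 0 * LC 1 1 ≤ 2 * Real.sqrt (1 + δ)) :=
  cholesky_ratio_bounds_general A B LA LC δ hδ hdetA hdetB hdetAB hLA hLCtri hLC00 hLC11 hLC
end

section
/- Let C = ((u, v), (v, w)) be a real positive definite symmetric 2×2 matrix with det C ≥ 1 - 2δ and det(I + C) ≤ 4(1 + δ) for some δ with 0 ≤ δ < 10⁻⁴. Then uw ≥ 1 - 2δ, u + w ≤ 2(1 + 3δ), (√u - √w)² ≤ 10δ, and max(|u - 1|, |w - 1|) ≤ 16√δ. -/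
set_option maxHeartbeats 1000000

open Matrix

theorem small_delta_estimates (u v w δ : ℝ) (hδ0 : 0 ≤ δ) (hδ : δ < 10 ^ (-4 : ℤ))
    (hC : (!![u, v; v, w] : Matrix (Fin 2) (Fin 2) ℝ).PosDef)
    (hdet : 1 - 2 * δ ≤ (!![u, v; v, w] : Matrix (Fin 2) (Fin 2) ℝ).det)
    (hdet1 : ((1 : Matrix (Fin 2) (Fin 2) ℝ) + !![u, v; v, w]).det ≤ 4 * (1 + δ)) :
    1 - 2 * δ ≤ u * w ∧ u + w ≤ 2 * (1 + 3 * δ) ∧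
    (Real.sqrt u - Real.sqrt w) ^ 2 ≤ 10 * δ ∧
    max |u - 1| |w - 1| ≤ 16 * Real.sqrt δ := by
  have hδ4 : δ < 1/10000 := by
    have : (10:ℝ) ^ (-4 : ℤ) = 1/10000 := by norm_num
    linarith [this ▸ hδ]
  have hu : 0 < u := by
    have h1 := hC.dotProduct_mulVec_pos (x := (![1,0] : Fin 2 → ℝ)) (by intro h; have := congrFun h 0; simp at this)
    simpa [dotProduct, Matrix.mulVec, Fin.sum_univ_two] using h1
  have hw : 0 < w := by
    have h1 := hC.dotProduct_mulVec_pos (x := (![0,1] : Fin 2 → ℝ)) (by intro h; have := congrFun h 1; simp at this)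
    simpa [dotProduct, Matrix.mulVec, Fin.sum_univ_two] using h1
  have hv : v * v < u * w := by
    have := hC.det_pos
    simp [Matrix.det_fin_two_of] at this
    linarith
  have hdet' : 1 - 2*δ ≤ u*w - v*v := by
    have h : (!![u, v; v, w] : Matrix (Fin 2) (Fin 2) ℝ).det = u*w - v*v := by
      simp [Matrix.det_fin_two_of]
    linarith [h ▸ hdet]
  have hdet1' : (1+u)*(1+w) - v*v ≤ 4*(1+δ) := by
    have h : ((1 : Matrix (Fin 2) (Fin 2) ℝ) + !![u, v; v, w]).det = (1+u)*(1+w) - v*v := by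
      simp [Matrix.det_fin_two, Matrix.one_apply]
    linarith [h ▸ hdet1]
  have huw : 1 - 2*δ ≤ u * w := by nlinarith [mul_self_nonneg v]
  have hsum : u + w ≤ 2*(1+3*δ) := by nlinarith
  refine ⟨huw, hsum, ?_, ?_⟩
  · have hsu : Real.sqrt u ^ 2 = u := Real.sq_sqrt hu.le
    have hsw : Real.sqrt w ^ 2 = w := Real.sq_sqrt hw.le
    have hm : Real.sqrt u * Real.sqrt w = Real.sqrt (u*w) := (Real.sqrt_mul hu.le w).symm
    have h1 : 1 - 2*δ ≤ Real.sqrt (u*w) := by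
      rw [show (1:ℝ) - 2*δ = Real.sqrt ((1-2*δ)^2) by
        rw [Real.sqrt_sq (by linarith)]]
      apply Real.sqrt_le_sqrt
      nlinarith
    nlinarith [hsu, hsw, hm, h1, hsum]
  · set s := Real.sqrt δ with hs
    have hs0 : 0 ≤ s := Real.sqrt_nonneg δ
    have hs2 : s^2 = δ := Real.sq_sqrt hδ0
    have hsmall : s ≤ 1/100 := by nlinarith
    have hqu : u^2 - (2+6*s^2)*u + 1 - 2*s^2 ≤ 0 := by
      nlinarith [mul_le_mul_of_nonneg_left (by linarith [hsum] : w ≤ 2+6*δ-u) hu.le]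
    have hqw : w^2 - (2+6*s^2)*w + 1 - 2*s^2 ≤ 0 := by
      nlinarith [mul_le_mul_of_nonneg_left (by linarith [hsum] : u ≤ 2+6*δ-w) hw.le]
    have hub : u ≤ 2 + 6*δ := by linarith
    have hwb : w ≤ 2 + 6*δ := by linarith
    have hss : 0 ≤ s*s := mul_nonneg hs0 hs0
    have habsu : (u-1)^2 ≤ 20*s^2 := by
      nlinarith [hqu, hs2, mul_nonneg hss (by linarith : (0:ℝ) ≤ 2 + 6*δ - u),
        mul_le_mul_of_nonneg_left hδ4.le hss]
    have habsw : (w-1)^2 ≤ 20*s^2 := by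
      nlinarith [hqw, hs2, mul_nonneg hss (by linarith : (0:ℝ) ≤ 2 + 6*δ - w),
        mul_le_mul_of_nonneg_left hδ4.le hss]
    rw [max_le_iff, abs_le, abs_le]
    refine ⟨⟨by nlinarith [habsu, hs0, sq_nonneg (u-1+16*s)],
        by nlinarith [habsu, hs0, sq_nonneg (u-1-16*s)]⟩,
      ⟨by nlinarith [habsw, hs0, sq_nonneg (w-1+16*s)],
        by nlinarith [habsw, hs0, sq_nonneg (w-1-16*s)]⟩⟩
end
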